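/- Let N and M be von Neumann algebras acting on a Hilbert space H. If N ⊆ M and d(N, M) < 1, then N = M. -/

import Mathlib

/-!
Since `N ⊆ M`, every `x ∈ M` may be translated by elements of `N` without leaving `M`, and
the distance from `x` to `N` does not change. Rescaling the unit ball shows
`infDist x N ≤ d ‖x‖` for `x ∈ M`, where `d = d(N, M)`; applied to `x - n` and minimised
over `n ∈ N` this gives `infDist x N ≤ d · infDist x N`, so `infDist x N = 0` when
`d < 1`. As `N` is norm closed, `x ∈ N`.
-/

set_option synthInstance.maxHeartbeats 400000
set_option maxHeartbeats 1000000

/-- The closed unit ball of a von Neumann algebra. -/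
def vnBall {H : Type*} [NormedAddCommGroup H] [InnerProductSpace ℂ H] [CompleteSpace H]
    (N : VonNeumannAlgebra H) : Set (H →L[ℂ] H) := {x | x ∈ N ∧ ‖x‖ ≤ 1}

/-- The Kadison–Kastler distance between two von Neumann algebras acting on the same
Hilbert space: the maximum of the two one-sided Hausdorff-type distances between their
closed unit balls. -/
noncomputable def kkDist {H : Type*} [NormedAddCommGroup H] [InnerProductSpace ℂ H]
    [CompleteSpace H] (N M : VonNeumannAlgebra H) : ℝ :=
  max (⨆ n : vnBall N, ⨅ m : vnBall M, ‖(n : H →L[ℂ] H) - m‖)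
      (⨆ m : vnBall M, ⨅ n : vnBall N, ‖(m : H →L[ℂ] H) - n‖)

open Metric

namespace AddSubgroup

variable {E : Type*} [SeminormedAddCommGroup E]

theorem infDist_sub_of_mem (S : AddSubgroup E) (x : E) {y : E} (hy : y ∈ S) :
    infDist (x - y) S = infDist x S := by
  rw [← QuotientAddGroup.norm_mk, ← QuotientAddGroup.norm_mk, QuotientAddGroup.mk_sub,
    (QuotientAddGroup.eq_zero_iff y).2 hy, sub_zero]

theorem le_of_infDist_le_mul_norm {S T : AddSubgroup E} (hS : IsClosed (S : Set E))
    (hST : S ≤ T) {r : ℝ} (hr0 : 0 ≤ r) (hr1 : r < 1)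
    (h : ∀ x ∈ T, infDist x S ≤ r * ‖x‖) : T ≤ S := by
  intro x hx
  have : Nonempty (S : Set E) := ⟨⟨0, S.zero_mem⟩⟩
  have hle : infDist x S ≤ r * infDist x S :=
    calc infDist x S ≤ ⨅ y : (S : Set E), r * dist x y := le_ciInf fun y => by
          rw [← S.infDist_sub_of_mem x y.2, dist_eq_norm]
          exact h _ (T.sub_mem hx (hST y.2))
      _ = r * infDist x S := by rw [infDist_eq_iInf, Real.mul_iInf_of_nonneg hr0]
  have hzero : infDist x S = 0 := by nlinarith [infDist_nonneg (x := x) (s := (S : Set E))]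
  exact (hS.mem_iff_infDist_zero ⟨0, S.zero_mem⟩).2 hzero

end AddSubgroup

theorem Submodule.infDist_smul_le {𝕜 E : Type*} [NormedField 𝕜] [SeminormedAddCommGroup E]
    [NormedSpace 𝕜 E] (p : Submodule 𝕜 E) (c : 𝕜) (y : E) :
    infDist (c • y) p ≤ ‖c‖ * infDist y p := by
  have : Nonempty p := ⟨0⟩
  rw [infDist_eq_iInf (x := y), Real.mul_iInf_of_nonneg (norm_nonneg c)]
  exact le_ciInf fun a => (infDist_le_dist_of_mem (p.smul_mem c a.2)).trans_eq (dist_smul₀ c y a)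

namespace VonNeumannAlgebra

variable {H : Type*} [NormedAddCommGroup H] [InnerProductSpace ℂ H] [CompleteSpace H]

theorem isClosed (N : VonNeumannAlgebra H) : IsClosed (N : Set (H →L[ℂ] H)) := by
  rw [← N.centralizer_centralizer]
  exact Set.isClosed_centralizer _

theorem zero_mem_vnBall (N : VonNeumannAlgebra H) : 0 ∈ vnBall N :=
  ⟨zero_mem N, by simp⟩

theorem iInf_norm_sub_le_norm (N : VonNeumannAlgebra H) (y : H →L[ℂ] H) :
    ⨅ n : vnBall N, ‖y - n‖ ≤ ‖y‖ :=
  (ciInf_le ⟨0, by rintro _ ⟨n, rfl⟩; positivity⟩ ⟨0, N.zero_mem_vnBall⟩).trans_eq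
    (by rw [sub_zero])

theorem kkDist_nonneg (N M : VonNeumannAlgebra H) : 0 ≤ kkDist N M :=
  le_max_of_le_left (Real.iSup_nonneg fun _ => Real.iInf_nonneg fun _ => norm_nonneg _)

theorem infDist_le_kkDist_of_mem_vnBall (N : VonNeumannAlgebra H) {M : VonNeumannAlgebra H}
    {m : H →L[ℂ] H} (hm : m ∈ vnBall M) : infDist m N ≤ kkDist N M := by
  have : Nonempty (vnBall N) := ⟨⟨0, N.zero_mem_vnBall⟩⟩
  have hbdd :
      BddAbove (Set.range fun m' : vnBall M => ⨅ n : vnBall N, ‖(m' : H →L[ℂ] H) - n‖) :=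
    ⟨1, by rintro _ ⟨m', rfl⟩; exact (N.iInf_norm_sub_le_norm m').trans m'.2.2⟩
  calc infDist m N ≤ ⨅ n : vnBall N, ‖m - n‖ :=
        le_ciInf fun n => (infDist_le_dist_of_mem n.2.1).trans_eq (dist_eq_norm _ _)
    _ ≤ ⨆ m' : vnBall M, ⨅ n : vnBall N, ‖(m' : H →L[ℂ] H) - n‖ :=
        le_ciSup hbdd ⟨m, hm⟩
    _ ≤ kkDist N M := le_max_right _ _

theorem infDist_le_kkDist_mul_norm (N : VonNeumannAlgebra H) {M : VonNeumannAlgebra H}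
    {x : H →L[ℂ] H} (hx : x ∈ M) : infDist x N ≤ kkDist N M * ‖x‖ := by
  rcases eq_or_ne x 0 with rfl | hx0
  · simp [infDist_zero_of_mem (zero_mem N)]
  set c : ℂ := (‖x‖ : ℂ)
  have hc : c ≠ 0 := by simpa [c] using hx0
  have hball : c⁻¹ • x ∈ vnBall M := ⟨Subalgebra.smul_mem M.toSubalgebra hx _, by
    rw [norm_smul]; simp [c, hx0]⟩
  calc infDist x N = infDist (c • c⁻¹ • x) N := by rw [smul_inv_smul₀ hc]
    _ ≤ ‖c‖ * infDist (c⁻¹ • x) N := N.toSubalgebra.toSubmodule.infDist_smul_le c _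
    _ ≤ ‖x‖ * kkDist N M := by
      rw [Complex.norm_real, norm_norm]
      gcongr
      exact N.infDist_le_kkDist_of_mem_vnBall hball
    _ = kkDist N M * ‖x‖ := mul_comm _ _

end VonNeumannAlgebra

/-- If `N ⊆ M` are von Neumann algebras on a Hilbert space `H` with `d(N, M) < 1`,
then `N = M`. -/
theorem subalgebra_eq_of_kkDist_lt_one {H : Type*} [NormedAddCommGroup H]
    [InnerProductSpace ℂ H] [CompleteSpace H] (N M : VonNeumannAlgebra H)
    (hNM : (N : Set (H →L[ℂ] H)) ⊆ (M : Set (H →L[ℂ] H))) (hd : kkDist N M < 1) :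
    N = M :=
  le_antisymm hNM <|
    AddSubgroup.le_of_infDist_le_mul_norm (S := N.toSubalgebra.toSubmodule.toAddSubgroup)
      (T := M.toSubalgebra.toSubmodule.toAddSubgroup) N.isClosed hNM (N.kkDist_nonneg M) hd
      fun _ hx => N.infDist_le_kkDist_mul_norm hx
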